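/- Let f : [0,1] → ℝ satisfy: (1) f is twice continuously differentiable with f(1) = 0 and ∫₀¹ f(x) dx = 1; (2) f₁(x) = f(x) + f(1−x) is positive at every rational point of [0,1]; (3) every complex σ ≠ 1 with ∫₀¹ t^σ f₁(t) dt = 1 satisfies Re σ < 0. Define a_p = Λ_p(1)^{-1/p}. Suppose in addition that for the δ ∈ (0,1/2) and p₀ furnished by the Main Theorem (for some constants 0 < B < 1 < A) the inequalities B ≤ a_p and |a_p − a_{p−1}| ≤ A/p^{2+δ} hold for all p ≤ p₀. Then there exists y⁰ > 0 such that Λ_p(y⁰) → 1 as p → ∞, i.e., the recurrence admits a separating solution with finite positive limit (∫₀¹ f(x) dx)^{-1} = 1. -/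

import Mathlib

/-! Scaling the recurrence gives `Λ_p(y) = y ^ p Λ_p(1)`, and `Λ_p(1) > 0` because
symmetrizing the recurrence under `q ↦ p + 1 - q` replaces `f` by `f₁ / 2`. Hence
`Λ_p(y) = (y / a_p) ^ p`. The bounds of the Main Theorem make the increments of `a_p` of
order `p^{-2-δ}`, so `a_p → L ≥ B > 0` with `p (a_p - L) → 0`, which forces `(L / a_p) ^ p → 1`:
`y⁰ = L` is a separating solution. -/

open Filter

/-- `Λ` is the family of sequences defined by the quadratic recurrence
`Λ_1(y) = y`, `Λ_{p+1}(y) = (1/p) ∑_{q=1}^p f(q/(p+1)) Λ_q(y) Λ_{p+1-q}(y)` for `p ≥ 1`. -/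
def IsLamSeq (f : ℝ → ℝ) (Λ : ℝ → ℕ → ℝ) : Prop :=
  (∀ y : ℝ, Λ y 1 = y) ∧
  ∀ y : ℝ, ∀ p : ℕ, 1 ≤ p →
    Λ y (p + 1) =
      (1 / (p : ℝ)) * ∑ q ∈ Finset.Icc 1 p,
        f ((q : ℝ) / ((p : ℝ) + 1)) * Λ y q * Λ y (p + 1 - q)

open Finset Topology

theorem Finset.sum_Icc_one_reflect {M : Type*} [AddCommMonoid M] (g : ℕ → M) (m : ℕ) :
    ∑ q ∈ Icc 1 m, g (m + 1 - q) = ∑ q ∈ Icc 1 m, g q := by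
  refine sum_nbij' (fun q => m + 1 - q) (fun q => m + 1 - q) ?_ ?_ ?_ ?_ ?_ <;>
    intro q hq <;> simp only [mem_Icc] at hq ⊢ <;> omega

namespace IsLamSeq

variable {f : ℝ → ℝ} {Λ : ℝ → ℕ → ℝ}

theorem apply_eq_pow_mul (hΛ : IsLamSeq f Λ) (y : ℝ) {p : ℕ} (hp : 1 ≤ p) :
    Λ y p = y ^ p * Λ 1 p := by
  induction p using Nat.strong_induction_on with
  | _ p ih =>
    obtain ⟨m, rfl⟩ : ∃ m, p = m + 1 := ⟨p - 1, by omega⟩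
    rcases Nat.eq_zero_or_pos m with rfl | hm
    · simp [hΛ.1]
    rw [hΛ.2 y m hm, hΛ.2 1 m hm, Finset.mul_sum, Finset.mul_sum, Finset.mul_sum]
    refine sum_congr rfl fun q hq => ?_
    rw [mem_Icc] at hq
    rw [ih q (by omega) hq.1, ih (m + 1 - q) (by omega) (by omega),
      show y ^ (m + 1) = y ^ q * y ^ (m + 1 - q) by rw [← pow_add]; congr 1; omega]
    ring

theorem apply_pos (hΛ : IsLamSeq f Λ)
    (hpos : ∀ q : ℚ, (q : ℝ) ∈ Set.Icc (0 : ℝ) 1 → 0 < f q + f (1 - q))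
    {y : ℝ} (hy : 0 < y) {p : ℕ} (hp : 1 ≤ p) : 0 < Λ y p := by
  induction p using Nat.strong_induction_on with
  | _ p ih =>
    obtain ⟨m, rfl⟩ : ∃ m, p = m + 1 := ⟨p - 1, by omega⟩
    rcases Nat.eq_zero_or_pos m with rfl | hm
    · simpa [hΛ.1] using hy
    rw [hΛ.2 y m hm]
    set x : ℕ → ℝ := fun q => (q : ℝ) / ((m : ℝ) + 1)
    have hx_reflect : ∀ q ∈ Icc 1 m, x (m + 1 - q) = 1 - x q := by
      intro q hq
      rw [mem_Icc] at hq
      simp only [x]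
      rw [Nat.cast_sub (by omega)]
      field_simp
      push_cast
      ring
    have hsym : 2 * ∑ q ∈ Icc 1 m, f (x q) * Λ y q * Λ y (m + 1 - q) =
        ∑ q ∈ Icc 1 m, (f (x q) + f (1 - x q)) * (Λ y q * Λ y (m + 1 - q)) := by
      rw [two_mul]
      nth_rewrite 2 [← sum_Icc_one_reflect]
      rw [← sum_add_distrib]
      refine sum_congr rfl fun q hq => ?_
      rw [hx_reflect q hq, show m + 1 - (m + 1 - q) = q by simp at hq; omega]
      ring
    have hsum : 0 < ∑ q ∈ Icc 1 m, (f (x q) + f (1 - x q)) * (Λ y q * Λ y (m + 1 - q)) := by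
      refine sum_pos (fun q hq => ?_) ⟨1, by simp; omega⟩
      rw [mem_Icc] at hq
      have hfq : 0 < f (x q) + f (1 - x q) := by
        have hcast : ((q / (m + 1) : ℚ) : ℝ) = x q := by push_cast; rfl
        have hmem : x q ∈ Set.Icc (0 : ℝ) 1 := by
          refine ⟨by positivity, div_le_one_of_le₀ ?_ (by positivity)⟩
          exact_mod_cast hq.2.trans (Nat.le_succ m)
        have := hpos _ (hcast ▸ hmem)
        rwa [hcast] at this
      have := ih q (by omega) hq.1
      have := ih (m + 1 - q) (by omega) (by omega)
      positivity
    have : (0 : ℝ) < m := by exact_mod_cast hm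
    have : 0 < ∑ q ∈ Icc 1 m, f (x q) * Λ y q * Λ y (m + 1 - q) := by linarith
    positivity

theorem apply_eq_div_rpow_pow (hΛ : IsLamSeq f Λ)
    (hpos : ∀ q : ℚ, (q : ℝ) ∈ Set.Icc (0 : ℝ) 1 → 0 < f q + f (1 - q)) (y : ℝ) {p : ℕ}
    (hp : 1 ≤ p) : Λ y p = (y / Λ 1 p ^ (-1 / (p : ℝ))) ^ p := by
  have hΛ1 := hΛ.apply_pos hpos one_pos hp
  rw [div_pow, ← Real.rpow_natCast (_ ^ _), ← Real.rpow_mul hΛ1.le,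
    div_mul_cancel₀ _ (by positivity), Real.rpow_neg_one, div_inv_eq_mul, hΛ.apply_eq_pow_mul y hp]

end IsLamSeq

theorem exists_tendsto_and_tendsto_mul_dist_of_summable {X : Type*} [PseudoMetricSpace X]
    [CompleteSpace X] {b : ℕ → X} {d : ℕ → ℝ} (hb : ∀ n, dist (b n) (b (n + 1)) ≤ d n)
    (hd : Summable fun n : ℕ => ((n : ℝ) + 1) * d n) :
    ∃ L, Tendsto b atTop (𝓝 L) ∧
      Tendsto (fun n : ℕ => ((n : ℝ) + 1) * dist (b n) L) atTop (𝓝 0) := by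
  have hd0 : ∀ n, 0 ≤ d n := fun n => dist_nonneg.trans (hb n)
  have hd_summable : Summable d :=
    hd.of_nonneg_of_le hd0 fun n =>
      le_mul_of_one_le_left (hd0 n) (by linarith [n.cast_nonneg (α := ℝ)])
  obtain ⟨L, hL⟩ :=
    cauchySeq_tendsto_of_complete (cauchySeq_of_dist_le_of_summable d hb hd_summable)
  refine ⟨L, hL, squeeze_zero (fun n => by positivity) (fun n => ?_)
    (tendsto_sum_nat_add fun k => ((k : ℝ) + 1) * d k)⟩
  -- the tail `∑_{k ≥ n} d k` is dominated by `(n + 1)⁻¹ ∑_{k ≥ n} (k + 1) d k`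
  calc ((n : ℝ) + 1) * dist (b n) L
      ≤ ((n : ℝ) + 1) * ∑' k, d (n + k) := by
        gcongr
        exact dist_le_tsum_of_dist_le_of_tendsto d hb hd_summable hL n
    _ = ∑' k, ((n : ℝ) + 1) * d (k + n) := by
        rw [← tsum_mul_left]
        simp_rw [add_comm n]
    _ ≤ ∑' k, (((k + n : ℕ) : ℝ) + 1) * d (k + n) := by
        refine Summable.tsum_le_tsum (fun k => ?_)
          (((summable_nat_add_iff n).mpr hd_summable).mul_left _) ((summable_nat_add_iff n).mpr hd)
        gcongr
        · exact hd0 _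
        · linarith [k.cast_nonneg (α := ℝ)]

theorem tendsto_pow_of_tendsto_mul_sub_one {u : ℕ → ℝ}
    (h : Tendsto (fun n : ℕ => (n : ℝ) * (u n - 1)) atTop (𝓝 0)) :
    Tendsto (fun n => u n ^ n) atTop (𝓝 1) := by
  have hu : Tendsto u atTop (𝓝 1) := by
    have h' := h.mul (tendsto_inv_atTop_zero.comp tendsto_natCast_atTop_atTop)
    rw [zero_mul] at h'
    refine (zero_add (1 : ℝ) ▸ h'.add_const 1).congr' ?_
    filter_upwards [eventually_ge_atTop 1] with n hn
    have : (n : ℝ) ≠ 0 := by positivity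
    simp only [Function.comp_apply]
    field_simp
    ring
  have hu_pos : ∀ᶠ n in atTop, 0 < u n := hu.eventually (lt_mem_nhds one_pos)
  have hlog : Tendsto (fun n : ℕ => (n : ℝ) * Real.log (u n)) atTop (𝓝 0) := by
    have hlow : Tendsto (fun n : ℕ => (n : ℝ) * (u n - 1) / u n) atTop (𝓝 0) :=
      zero_div (1 : ℝ) ▸ h.div hu one_ne_zero
    refine tendsto_of_tendsto_of_tendsto_of_le_of_le' hlow h ?_ ?_
    · filter_upwards [hu_pos] with n hn
      rw [mul_div_assoc, sub_div, div_self hn.ne', one_div]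
      exact mul_le_mul_of_nonneg_left (Real.one_sub_inv_le_log_of_pos hn) n.cast_nonneg
    · filter_upwards [hu_pos] with n hn
      exact mul_le_mul_of_nonneg_left (Real.log_le_sub_one_of_pos hn) n.cast_nonneg
  have := (Real.continuous_exp.tendsto 0).comp hlog
  rw [Real.exp_zero] at this
  refine this.congr' ?_
  filter_upwards [hu_pos] with n hn
  simp [Real.exp_nat_mul, Real.exp_log hn]

theorem tendsto_natCast_mul_div_sub_one {a : ℕ → ℝ} {L : ℝ} (hL : L ≠ 0)
    (haL : Tendsto (fun n => a (n + 1)) atTop (𝓝 L))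
    (hrate : Tendsto (fun n : ℕ => ((n : ℝ) + 1) * dist (a (n + 1)) L) atTop (𝓝 0)) :
    Tendsto (fun p : ℕ => (p : ℝ) * (L / a p - 1)) atTop (𝓝 0) := by
  refine (tendsto_add_atTop_iff_nat 1).mp ?_
  have hnum : Tendsto (fun n : ℕ => ((n : ℝ) + 1) * (L - a (n + 1))) atTop (𝓝 0) := by
    refine squeeze_zero_norm (fun n => ?_) hrate
    rw [norm_mul, Real.norm_eq_abs, Real.norm_eq_abs, abs_of_pos (by positivity),
      Real.dist_eq, abs_sub_comm]
  refine (zero_div L ▸ hnum.div haL hL).congr' ?_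
  filter_upwards [haL.eventually_ne hL] with n hn
  rw [Pi.div_apply]
  push_cast
  field_simp

theorem summable_natCast_add_one_mul_div_rpow (A : ℝ) {δ : ℝ} (hδ : 0 < δ) :
    Summable fun n : ℕ => ((n : ℝ) + 1) * (A / ((n : ℝ) + 2) ^ ((2 : ℝ) + δ)) := by
  have hshift : Summable fun n : ℕ => 1 / ((n : ℝ) + 2) ^ ((1 : ℝ) + δ) := by
    have := (summable_nat_add_iff 2).mpr
      (Real.summable_one_div_nat_rpow.mpr (by linarith : (1 : ℝ) < 1 + δ))
    simpa only [Nat.cast_add, Nat.cast_ofNat] using this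
  have hbound : Summable fun n : ℕ => ((n : ℝ) + 1) / ((n : ℝ) + 2) ^ ((2 : ℝ) + δ) := by
    refine hshift.of_nonneg_of_le (fun n => by positivity) fun n => ?_
    have hpos : (0 : ℝ) < (n : ℝ) + 2 := by positivity
    have hpow : (0 : ℝ) < ((n : ℝ) + 2) ^ ((1 : ℝ) + δ) := by positivity
    rw [show (2 : ℝ) + δ = (1 + δ) + 1 by ring, Real.rpow_add_one hpos.ne',
      div_le_div_iff₀ (by positivity) hpow]
    nlinarith
  exact (hbound.mul_left A).congr fun n => by ring

theorem stmt19_general (f : ℝ → ℝ)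
    (hpos : ∀ q : ℚ, (q : ℝ) ∈ Set.Icc (0:ℝ) 1 → 0 < f (q : ℝ) + f (1 - (q : ℝ)))
    (Λ : ℝ → ℕ → ℝ) (hΛ : IsLamSeq f Λ)
    (a : ℕ → ℝ) (ha : ∀ p : ℕ, 1 ≤ p → a p = (Λ 1 p) ^ (-(1 : ℝ) / (p : ℝ)))
    (δ A B : ℝ) (hδ : δ ∈ Set.Ioo (0 : ℝ) (1 / 2))
    (hB : 0 < B) (p₀ : ℕ)
    (hmain : (∀ p : ℕ, 1 ≤ p → p ≤ p₀ →
        B ≤ a p ∧ (2 ≤ p → |a p - a (p - 1)| ≤ A / (p : ℝ) ^ ((2 : ℝ) + δ))) →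
      ∀ p : ℕ, 1 ≤ p →
        B ≤ a p ∧ (2 ≤ p → |a p - a (p - 1)| ≤ A / (p : ℝ) ^ ((2 : ℝ) + δ)))
    (hbase : ∀ p : ℕ, 1 ≤ p → p ≤ p₀ →
        B ≤ a p ∧ (2 ≤ p → |a p - a (p - 1)| ≤ A / (p : ℝ) ^ ((2 : ℝ) + δ))) :
    ∃ y0 : ℝ, 0 < y0 ∧ Tendsto (fun p => Λ y0 p) atTop (nhds 1) := by
  have hbounds := hmain hbase
  have hstep (n : ℕ) :
      dist (a (n + 1)) (a (n + 1 + 1)) ≤ A / ((n : ℝ) + 2) ^ ((2 : ℝ) + δ) := by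
    have := (hbounds (n + 2) (by omega)).2 le_add_self
    rw [Real.dist_eq, abs_sub_comm]
    simpa [add_assoc, one_add_one_eq_two] using this
  obtain ⟨L, haL, hrate⟩ :=
    exists_tendsto_and_tendsto_mul_dist_of_summable hstep
      (summable_natCast_add_one_mul_div_rpow A hδ.1)
  have hL : 0 < L := hB.trans_le (ge_of_tendsto' haL fun n => (hbounds (n + 1) le_add_self).1)
  refine ⟨L, hL, (tendsto_pow_of_tendsto_mul_sub_one
    (tendsto_natCast_mul_div_sub_one hL.ne' haL hrate)).congr' ?_⟩
  filter_upwards [eventually_ge_atTop 1] with p hp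
  rw [hΛ.apply_eq_div_rpow_pow hpos L hp, ha p hp]

theorem stmt19 (f : ℝ → ℝ) (hf : ContDiffOn ℝ 2 f (Set.Icc 0 1))
    (hf1 : f 1 = 0) (hint : ∫ x in (0:ℝ)..1, f x = 1)
    (hpos : ∀ q : ℚ, (q : ℝ) ∈ Set.Icc (0:ℝ) 1 → 0 < f (q : ℝ) + f (1 - (q : ℝ)))
    (hassum3 : ∀ σ : ℂ, σ ≠ 1 →
      (∫ t in (0:ℝ)..1, (t : ℂ) ^ σ * ((f t + f (1 - t) : ℝ) : ℂ)) = 1 → σ.re < 0)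
    (Λ : ℝ → ℕ → ℝ) (hΛ : IsLamSeq f Λ)
    (a : ℕ → ℝ) (ha : ∀ p : ℕ, 1 ≤ p → a p = (Λ 1 p) ^ (-(1 : ℝ) / (p : ℝ)))
    (δ A B : ℝ) (hδ : δ ∈ Set.Ioo (0 : ℝ) (1 / 2))
    (hB : 0 < B) (hB1 : B < 1) (hA : 1 < A) (p₀ : ℕ)
    (hmain : (∀ p : ℕ, 1 ≤ p → p ≤ p₀ →
        B ≤ a p ∧ (2 ≤ p → |a p - a (p - 1)| ≤ A / (p : ℝ) ^ ((2 : ℝ) + δ))) →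
      ∀ p : ℕ, 1 ≤ p →
        B ≤ a p ∧ (2 ≤ p → |a p - a (p - 1)| ≤ A / (p : ℝ) ^ ((2 : ℝ) + δ)))
    (hbase : ∀ p : ℕ, 1 ≤ p → p ≤ p₀ →
        B ≤ a p ∧ (2 ≤ p → |a p - a (p - 1)| ≤ A / (p : ℝ) ^ ((2 : ℝ) + δ))) :
    ∃ y0 : ℝ, 0 < y0 ∧ Tendsto (fun p => Λ y0 p) atTop (nhds 1) :=
  stmt19_general f hpos Λ hΛ a ha δ A B hδ hB p₀ hmain hbase
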